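/- Let τ, γ, λ > 0, U ∈ ℝ^{p×n}, V ∈ ℝ^{p×m}, and define Ψ(W) := (τ/2)‖U − VW‖² + (γ/2)‖W‖² for W ∈ ℝ^{m×n}. Suppose W* ∈ ℝ^{m×n} is a P-stationary point for some β > 0, i.e., W* ∈ Prox_{βλ‖·‖_{0,2}}(W* − β∇Ψ(W*)). Then W* is the unique minimizer of Ψ(W) + λ‖W‖_{0,2} on the neighborhood {W : ‖W − W*‖ < √(βλ/(2m²))}; in particular, Ψ(W) + λ‖W‖_{0,2} > Ψ(W*) + λ‖W*‖_{0,2} for every W ≠ W* in that neighborhood. -/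

import Mathlib

/-!
The proximal map of `λ‖·‖_{0,2}` separates over rows into a hard threshold: a P-stationary
point `W*` has `∇Ψ(W*)_i = 0` and `‖W*_i‖² ≥ 2βλ` on its nonzero rows, and
`β‖∇Ψ(W*)_i‖² ≤ 2λ` on its zero rows. Within the ball no nonzero row of `W*` can vanish, and on
each row that becomes nonzero Cauchy–Schwarz bounds `|⟨∇Ψ(W*)_i, W_i⟩|` by `λ`, the price of
the new row. As `Ψ` is quadratic,
`Ψ(W) = Ψ(W*) + ⟨∇Ψ(W*), W − W*⟩ + (τ/2)‖V(W − W*)‖² + (γ/2)‖W − W*‖²`,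
so the objective grows by at least `(γ/2)‖W − W*‖²`.
-/

set_option autoImplicit false

open Matrix

/-- Squared Frobenius norm of a matrix. -/
noncomputable def frobSq {m n : ℕ} (W : Matrix (Fin m) (Fin n) ℝ) : ℝ :=
  ∑ i, ∑ j, (W i j) ^ 2

/-- Frobenius norm of a matrix. -/
noncomputable def frobNorm {m n : ℕ} (W : Matrix (Fin m) (Fin n) ℝ) : ℝ :=
  Real.sqrt (frobSq W)

open Classical in
/-- `‖W‖_{0,2}`: the number of nonzero rows of `W`, as a real number. -/
noncomputable def norm02 {m n : ℕ} (W : Matrix (Fin m) (Fin n) ℝ) : ℝ :=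
  ((Finset.univ.filter fun s : Fin m => W s ≠ 0).card : ℝ)

/-- The proximal operator (as a set of global minimizers):
`Prox_β G (H) = argmin_W { G(W) + (1/(2β))‖W − H‖² }`. -/
def ProxSet {m n : ℕ} (β : ℝ) (G : Matrix (Fin m) (Fin n) ℝ → ℝ)
    (H : Matrix (Fin m) (Fin n) ℝ) : Set (Matrix (Fin m) (Fin n) ℝ) :=
  {W | ∀ Z : Matrix (Fin m) (Fin n) ℝ,
    G W + (1 / (2 * β)) * frobSq (W - H) ≤ G Z + (1 / (2 * β)) * frobSq (Z - H)}

/-- The objective `Ψ(W) = (τ/2)‖U − VW‖² + (γ/2)‖W‖²`. -/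
noncomputable def Psi {p m n : ℕ} (τ γ : ℝ) (U : Matrix (Fin p) (Fin n) ℝ)
    (V : Matrix (Fin p) (Fin m) ℝ) (W : Matrix (Fin m) (Fin n) ℝ) : ℝ :=
  (τ / 2) * frobSq (U - V * W) + (γ / 2) * frobSq W

/-- The gradient of `Ψ`, namely `∇Ψ(W) = τ Vᵀ(VW − U) + γ W`. -/
noncomputable def gradPsi {p m n : ℕ} (τ γ : ℝ) (U : Matrix (Fin p) (Fin n) ℝ)
    (V : Matrix (Fin p) (Fin m) ℝ) (W : Matrix (Fin m) (Fin n) ℝ) :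
    Matrix (Fin m) (Fin n) ℝ :=
  τ • (Vᵀ * (V * W - U)) + γ • W

noncomputable def rowSq {ι : Type*} [Fintype ι] (v : ι → ℝ) : ℝ := ∑ j, v j ^ 2

noncomputable def frobInner {m n : ℕ} (A B : Matrix (Fin m) (Fin n) ℝ) : ℝ := ∑ i, A i ⬝ᵥ B i

section RowSq

variable {ι : Type*} [Fintype ι]

lemma rowSq_nonneg (v : ι → ℝ) : 0 ≤ rowSq v :=
  Finset.sum_nonneg fun _ _ => sq_nonneg _

lemma rowSq_eq_zero_iff {v : ι → ℝ} : rowSq v = 0 ↔ v = 0 := by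
  simp [rowSq, Finset.sum_eq_zero_iff_of_nonneg fun j _ => sq_nonneg (v j), funext_iff]

@[simp] lemma rowSq_zero : rowSq (0 : ι → ℝ) = 0 := by
  simp [rowSq]

lemma rowSq_smul (c : ℝ) (v : ι → ℝ) : rowSq (c • v) = c ^ 2 * rowSq v := by
  simp [rowSq, mul_pow, Finset.mul_sum]

lemma rowSq_neg (v : ι → ℝ) : rowSq (-v) = rowSq v := by
  simp [rowSq]

lemma dotProduct_sq_le_rowSq_mul (v w : ι → ℝ) : (v ⬝ᵥ w) ^ 2 ≤ rowSq v * rowSq w :=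
  Finset.sum_mul_sq_le_sq_mul_sq _ _ _

end RowSq

section Frobenius

variable {m n : ℕ}

lemma frobSq_eq_sum_rowSq (W : Matrix (Fin m) (Fin n) ℝ) : frobSq W = ∑ i, rowSq (W i) := rfl

lemma frobSq_nonneg (W : Matrix (Fin m) (Fin n) ℝ) : 0 ≤ frobSq W :=
  Finset.sum_nonneg fun _ _ => rowSq_nonneg _

lemma rowSq_le_frobSq (W : Matrix (Fin m) (Fin n) ℝ) (i : Fin m) : rowSq (W i) ≤ frobSq W :=
  Finset.single_le_sum (fun i _ => rowSq_nonneg (W i)) (Finset.mem_univ i)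

lemma frobSq_pos {W : Matrix (Fin m) (Fin n) ℝ} (hW : W ≠ 0) : 0 < frobSq W := by
  refine (frobSq_nonneg W).lt_of_ne fun h => hW ?_
  funext i
  exact rowSq_eq_zero_iff.1 <| le_antisymm (h ▸ rowSq_le_frobSq W i) (rowSq_nonneg _)

lemma frobSq_neg (W : Matrix (Fin m) (Fin n) ℝ) : frobSq (-W) = frobSq W := by
  simp [frobSq]

lemma frobSq_add (A B : Matrix (Fin m) (Fin n) ℝ) :
    frobSq (A + B) = frobSq A + 2 * frobInner A B + frobSq B := by
  simp only [frobSq, frobInner, dotProduct, Matrix.add_apply, Finset.mul_sum,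
    ← Finset.sum_add_distrib]
  exact Finset.sum_congr rfl fun i _ => Finset.sum_congr rfl fun j _ => by ring

lemma frobInner_add_left (A B C : Matrix (Fin m) (Fin n) ℝ) :
    frobInner (A + B) C = frobInner A C + frobInner B C := by
  simp only [frobInner, ← Finset.sum_add_distrib]
  exact Finset.sum_congr rfl fun i _ => add_dotProduct (A i) (B i) (C i)

lemma frobInner_smul_left (c : ℝ) (A B : Matrix (Fin m) (Fin n) ℝ) :
    frobInner (c • A) B = c * frobInner A B := by
  simp only [frobInner, Finset.mul_sum]
  exact Finset.sum_congr rfl fun i _ => smul_dotProduct c (A i) (B i)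

lemma frobInner_eq_trace (A B : Matrix (Fin m) (Fin n) ℝ) : frobInner A B = trace (Aᵀ * B) := by
  simp only [frobInner, dotProduct, trace, diag, mul_apply, transpose_apply]
  exact Finset.sum_comm

lemma frobInner_mul_right {p : ℕ} (X : Matrix (Fin p) (Fin n) ℝ) (V : Matrix (Fin p) (Fin m) ℝ)
    (D : Matrix (Fin m) (Fin n) ℝ) : frobInner X (V * D) = frobInner (Vᵀ * X) D := by
  simp only [frobInner_eq_trace, transpose_mul, transpose_transpose, Matrix.mul_assoc]

open Classical in
lemma norm02_eq_sum (W : Matrix (Fin m) (Fin n) ℝ) :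
    norm02 W = ∑ i, if W i ≠ 0 then (1 : ℝ) else 0 := by
  rw [norm02, Finset.natCast_card_filter]
  -- the two sides differ only in their `Decidable` instances
  congr!

end Frobenius

lemma Psi_add {p m n : ℕ} (τ γ : ℝ) (U : Matrix (Fin p) (Fin n) ℝ)
    (V : Matrix (Fin p) (Fin m) ℝ) (W D : Matrix (Fin m) (Fin n) ℝ) :
    Psi τ γ U V (W + D) = Psi τ γ U V W + frobInner (gradPsi τ γ U V W) D
      + τ / 2 * frobSq (V * D) + γ / 2 * frobSq D := by
  have hres : U - V * (W + D) = -((V * W - U) + V * D) := by rw [Matrix.mul_add]; abel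
  have hres' : U - V * W = -(V * W - U) := (neg_sub _ _).symm
  simp only [Psi, gradPsi, hres, hres', frobSq_neg, frobSq_add, frobInner_add_left,
    frobInner_smul_left, frobInner_mul_right]
  ring

lemma Fintype.sum_apply_update_add {ι α : Type*} [Fintype ι] [DecidableEq ι] (F : ι → α → ℝ)
    (f : ι → α) (i : ι) (a : α) :
    ∑ s, F s (Function.update f i a s) + F i (f i) = ∑ s, F s (f s) + F i a := by
  simp only [Function.apply_update F, Finset.sum_update_of_mem (Finset.mem_univ i),
    ← Finset.add_sum_erase _ _ (Finset.mem_univ i), Finset.sdiff_singleton_eq_erase]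
  ring

section ProxNorm02

variable {m n : ℕ} {β lam : ℝ} {W H G : Matrix (Fin m) (Fin n) ℝ}

open Classical in
lemma norm02_add_frobSq_eq_sum (lam c : ℝ) (Z H : Matrix (Fin m) (Fin n) ℝ) :
    lam * norm02 Z + c * frobSq (Z - H)
      = ∑ s, (lam * (if Z s ≠ 0 then 1 else 0) + c * rowSq (Z s - H s)) := by
  simp only [norm02_eq_sum, frobSq_eq_sum_rowSq, Finset.mul_sum, ← Finset.sum_add_distrib]
  rfl

open Classical in
lemma row_le_of_mem_proxSet_norm02 (hP : W ∈ ProxSet β (fun Z => lam * norm02 Z) H) (i : Fin m)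
    (v : Fin n → ℝ) :
    lam * (if W i ≠ 0 then 1 else 0) + rowSq (W i - H i) / (2 * β)
      ≤ lam * (if v ≠ 0 then 1 else 0) + rowSq (v - H i) / (2 * β) := by
  let Z : Matrix (Fin m) (Fin n) ℝ := Function.update W i v
  have h : lam * norm02 W + 1 / (2 * β) * frobSq (W - H)
      ≤ lam * norm02 Z + 1 / (2 * β) * frobSq (Z - H) :=
    hP Z
  rw [norm02_add_frobSq_eq_sum, norm02_add_frobSq_eq_sum] at h
  have := Fintype.sum_apply_update_add
    (fun s u => lam * (if u ≠ 0 then 1 else 0) + 1 / (2 * β) * rowSq (u - H s)) W i v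
  beta_reduce at this
  simp only [one_div_mul_eq_div] at h this
  linarith

lemma row_eq_of_mem_proxSet_norm02 (hβ : 0 < β) (hlam : 0 ≤ lam)
    (hP : W ∈ ProxSet β (fun Z => lam * norm02 Z) H) {i : Fin m} (hi : W i ≠ 0) :
    W i = H i := by
  have h := row_le_of_mem_proxSet_norm02 hP i (H i)
  rw [if_pos hi, sub_self, rowSq_zero, zero_div] at h
  have hind : (if H i ≠ 0 then 1 else 0 : ℝ) ≤ 1 := by split_ifs <;> norm_num
  have hr : rowSq (W i - H i) ≤ 0 := by
    have : rowSq (W i - H i) / (2 * β) ≤ 0 := by nlinarith [mul_le_mul_of_nonneg_left hind hlam]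
    have := (div_le_iff₀ (by positivity : (0 : ℝ) < 2 * β)).1 this
    linarith
  exact sub_eq_zero.1 (rowSq_eq_zero_iff.1 (le_antisymm hr (rowSq_nonneg _)))

lemma two_mul_le_rowSq_of_mem_proxSet_norm02 (hβ : 0 < β) (hlam : 0 ≤ lam)
    (hP : W ∈ ProxSet β (fun Z => lam * norm02 Z) H) {i : Fin m} (hi : W i ≠ 0) :
    2 * β * lam ≤ rowSq (W i) := by
  have h := row_le_of_mem_proxSet_norm02 hP i 0
  rw [if_pos hi, row_eq_of_mem_proxSet_norm02 hβ hlam hP hi] at h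
  simp only [sub_self, zero_sub, rowSq_neg, rowSq_zero, zero_div, ne_eq, not_true_eq_false,
    if_false] at h
  rw [row_eq_of_mem_proxSet_norm02 hβ hlam hP hi]
  have : lam ≤ rowSq (H i) / (2 * β) := by linarith
  rw [le_div_iff₀ (by positivity)] at this
  linarith

lemma rowSq_le_of_mem_proxSet_norm02 (hβ : 0 < β) (hlam : 0 ≤ lam)
    (hP : W ∈ ProxSet β (fun Z => lam * norm02 Z) H) {i : Fin m} (hi : W i = 0) :
    rowSq (H i) ≤ 2 * β * lam := by
  have h := row_le_of_mem_proxSet_norm02 hP i (H i)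
  rw [hi] at h
  simp only [sub_self, zero_sub, rowSq_neg, rowSq_zero, zero_div, ne_eq, not_true_eq_false,
    if_false, mul_zero, zero_add, add_zero] at h
  have hind : (if ¬H i = 0 then 1 else 0 : ℝ) ≤ 1 := by split_ifs <;> norm_num
  have : rowSq (H i) / (2 * β) ≤ lam := by
    nlinarith [mul_le_mul_of_nonneg_left hind hlam]
  rw [div_le_iff₀ (by positivity)] at this
  linarith

lemma row_eq_zero_of_mem_proxSet_norm02_sub_smul (hβ : 0 < β) (hlam : 0 ≤ lam)
    (hP : W ∈ ProxSet β (fun Z => lam * norm02 Z) (W - β • G)) {i : Fin m} (hi : W i ≠ 0) :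
    G i = 0 := by
  have h : W i = W i - β • G i := row_eq_of_mem_proxSet_norm02 hβ hlam hP hi
  exact (smul_eq_zero.1 (sub_eq_self.1 h.symm)).resolve_left hβ.ne'

lemma mul_rowSq_le_of_mem_proxSet_norm02_sub_smul (hβ : 0 < β) (hlam : 0 ≤ lam)
    (hP : W ∈ ProxSet β (fun Z => lam * norm02 Z) (W - β • G)) {i : Fin m} (hi : W i = 0) :
    β * rowSq (G i) ≤ 2 * lam := by
  have h := rowSq_le_of_mem_proxSet_norm02 hβ hlam hP hi
  have hrow : (W - β • G) i = -(β • G i) := by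
    rw [show (W - β • G) i = W i - β • G i from rfl, hi, zero_sub]
  rw [hrow, rowSq_neg, rowSq_smul] at h
  nlinarith

end ProxNorm02

open Classical in
lemma dotProduct_add_mul_ite_sub_nonneg {ι : Type*} [Fintype ι] {β lam : ℝ} (hβ : 0 < β)
    {g w w' : ι → ℝ} (hg : w' ≠ 0 → g = 0) (hg' : w' = 0 → β * rowSq g ≤ 2 * lam)
    (hw' : w' ≠ 0 → 2 * β * lam ≤ rowSq w') (hd : 2 * rowSq (w - w') < β * lam) :
    0 ≤ g ⬝ᵥ (w - w') + lam * ((if w ≠ 0 then 1 else 0) - (if w' ≠ 0 then 1 else 0)) := by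
  by_cases hw'0 : w' = 0
  · subst hw'0
    have hgβ := hg' rfl
    by_cases hw0 : w = 0
    · simp [hw0]
    · have hcs := dotProduct_sq_le_rowSq_mul g w
      rw [sub_zero] at hd
      have hlam : 0 ≤ lam := by nlinarith [rowSq_nonneg g]
      have : rowSq g * rowSq w ≤ lam ^ 2 := by nlinarith [rowSq_nonneg g, rowSq_nonneg w]
      have := (abs_le_of_sq_le_sq' (hcs.trans this) hlam).1
      simp [hw0]
      linarith
  · have hw0 : w ≠ 0 := by
      rintro rfl
      have := hw' hw'0
      rw [zero_sub, rowSq_neg] at hd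
      nlinarith [rowSq_nonneg w']
    simp [hg hw'0, hw0, hw'0]

open Classical in
lemma frobInner_add_mul_norm02_sub_nonneg {m n : ℕ} {β lam : ℝ} (hβ : 0 < β)
    {G W W' : Matrix (Fin m) (Fin n) ℝ} (hG : ∀ i, W' i ≠ 0 → G i = 0)
    (hG' : ∀ i, W' i = 0 → β * rowSq (G i) ≤ 2 * lam)
    (hW' : ∀ i, W' i ≠ 0 → 2 * β * lam ≤ rowSq (W' i)) (hd : 2 * frobSq (W - W') < β * lam) :
    0 ≤ frobInner G (W - W') + lam * (norm02 W - norm02 W') := by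
  rw [norm02_eq_sum, norm02_eq_sum, ← Finset.sum_sub_distrib, Finset.mul_sum, frobInner,
    ← Finset.sum_add_distrib]
  refine Finset.sum_nonneg fun i _ => dotProduct_add_mul_ite_sub_nonneg hβ (hG i) (hG' i) (hW' i) ?_
  have : rowSq (W i - W' i) ≤ frobSq (W - W') := rowSq_le_frobSq (W - W') i
  linarith

lemma Psi_add_norm02_le_of_mem_proxSet {p m n : ℕ} {τ γ lam β : ℝ} (hτ : 0 ≤ τ) (hlam : 0 ≤ lam)
    (hβ : 0 < β) {U : Matrix (Fin p) (Fin n) ℝ} {V : Matrix (Fin p) (Fin m) ℝ}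
    {W W' : Matrix (Fin m) (Fin n) ℝ}
    (hP : W' ∈ ProxSet β (fun Z => lam * norm02 Z) (W' - β • gradPsi τ γ U V W'))
    (hd : 2 * frobSq (W - W') < β * lam) :
    Psi τ γ U V W' + lam * norm02 W' + γ / 2 * frobSq (W - W')
      ≤ Psi τ γ U V W + lam * norm02 W := by
  have hexp := Psi_add τ γ U V W' (W - W')
  rw [add_sub_cancel] at hexp
  have hlin := frobInner_add_mul_norm02_sub_nonneg hβ
    (fun _ => row_eq_zero_of_mem_proxSet_norm02_sub_smul hβ hlam hP)
    (fun _ => mul_rowSq_le_of_mem_proxSet_norm02_sub_smul hβ hlam hP)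
    (fun _ => two_mul_le_rowSq_of_mem_proxSet_norm02 hβ hlam hP) hd
  have hquad : 0 ≤ τ / 2 * frobSq (V * (W - W')) := by
    have := frobSq_nonneg (V * (W - W'))
    positivity
  linarith

lemma two_mul_frobSq_lt_of_frobNorm_lt {m n : ℕ} {a : ℝ} {D : Matrix (Fin m) (Fin n) ℝ}
    (h : frobNorm D < √(a / (2 * (m : ℝ) ^ 2))) : 2 * frobSq D < a := by
  rw [frobNorm, Real.sqrt_lt_sqrt_iff (frobSq_nonneg D)] at h
  have hpos : 0 < a / (2 * (m : ℝ) ^ 2) := (frobSq_nonneg D).trans_lt h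
  have hm : (1 : ℝ) ≤ m := by
    rcases Nat.eq_zero_or_pos m with rfl | hm
    · simp at hpos
    · exact_mod_cast hm
  have ha : 0 < a := by
    rw [div_pos_iff_of_pos_right (by positivity)] at hpos
    exact hpos
  have : a / (2 * (m : ℝ) ^ 2) ≤ a / 2 :=
    div_le_div_of_nonneg_left ha.le (by norm_num) (by nlinarith)
  linarith

/-- if `W*` is a P-stationary point of `Ψ(W) + λ‖W‖_{0,2}` for some
`β > 0`, then `W*` is the unique minimizer of `Ψ + λ‖·‖_{0,2}` on the neighborhood
`{W : ‖W − W*‖ < √(βλ/(2m²))}`: every other point of the neighborhood has a strictly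
larger objective value. -/
theorem pStationary_unique_local_minimizer
    (p m n : ℕ) (τ γ lam β : ℝ) (hτ : 0 < τ) (hγ : 0 < γ) (hlam : 0 < lam)
    (hβ : 0 < β)
    (U : Matrix (Fin p) (Fin n) ℝ) (V : Matrix (Fin p) (Fin m) ℝ)
    (Wstar : Matrix (Fin m) (Fin n) ℝ)
    (hP : Wstar ∈ ProxSet β (fun W => lam * norm02 W)
        (Wstar - β • gradPsi τ γ U V Wstar)) :
    (∀ W : Matrix (Fin m) (Fin n) ℝ,
      frobNorm (W - Wstar) < Real.sqrt (β * lam / (2 * (m : ℝ) ^ 2)) →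
        Psi τ γ U V Wstar + lam * norm02 Wstar ≤ Psi τ γ U V W + lam * norm02 W) ∧
    (∀ W : Matrix (Fin m) (Fin n) ℝ,
      frobNorm (W - Wstar) < Real.sqrt (β * lam / (2 * (m : ℝ) ^ 2)) → W ≠ Wstar →
        Psi τ γ U V Wstar + lam * norm02 Wstar < Psi τ γ U V W + lam * norm02 W) := by
  have hgrowth : ∀ W : Matrix (Fin m) (Fin n) ℝ,
      frobNorm (W - Wstar) < Real.sqrt (β * lam / (2 * (m : ℝ) ^ 2)) →
        Psi τ γ U V Wstar + lam * norm02 Wstar + γ / 2 * frobSq (W - Wstar)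
          ≤ Psi τ γ U V W + lam * norm02 W := fun W hW =>
    Psi_add_norm02_le_of_mem_proxSet hτ.le hlam.le hβ hP (two_mul_frobSq_lt_of_frobNorm_lt hW)
  refine ⟨fun W hW => ?_, fun W hW hne => ?_⟩
  · nlinarith [hgrowth W hW, frobSq_nonneg (W - Wstar)]
  · nlinarith [hgrowth W hW, frobSq_pos (sub_ne_zero.2 hne)]
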